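/- Let α, e be epsilon numbers and s an ordinal with s < α⁺ and Ep(s) ∩ α ⊆ e. Then s[α := e] < e⁺ and Ep(s[α := e]) ∩ e = Ep(s) ∩ α. -/

import Mathlib

open Ordinal

def IsEps (x : Ordinal.{0}) : Prop := omega0 ^ x = x

noncomputable def nextEps (x : Ordinal.{0}) : Ordinal.{0} := sInf {e | IsEps e ∧ x < e}

inductive InEp : Ordinal.{0} → Ordinal.{0} → Prop
  | self (x : Ordinal.{0}) (h : omega0 ^ x = x) : InEp x x
  | exp (x e c y : Ordinal.{0}) (h : omega0 ^ x ≠ x) (hm : (e, c) ∈ CNF omega0 x)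
      (hy : InEp y e) : InEp y x

/-- The set of epsilon numbers appearing in the iterated Cantor normal form of `x`. -/
def Ep (x : Ordinal.{0}) : Set Ordinal.{0} := {y | InEp y x}

/-- Substitution of the epsilon number `α` by the epsilon number `e` in the
iterated Cantor normal form of `x`. -/
noncomputable def subst (α e : Ordinal.{0}) (x : Ordinal.{0}) : Ordinal.{0} :=
  if h : omega0 ^ x = x then (if x = α then e else x)
  else ((CNF omega0 x).attach.map (fun p => omega0 ^ (subst α e p.1.1) * p.1.2)).sum
termination_by x
decreasing_by
  have hx0 : x ≠ 0 := by
    rintro rfl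
    have := p.2
    simp [Ordinal.CNF.zero_right] at this
  have hle := Ordinal.CNF.fst_le_log p.2
  have hlt : Ordinal.log omega0 x < x := by
    have h1 : x < omega0 ^ x :=
      lt_of_le_of_ne (Ordinal.right_le_opow x one_lt_omega0) (Ne.symm h)
    exact (Ordinal.lt_opow_iff_log_lt one_lt_omega0 hx0).mp h1
  exact lt_of_le_of_lt hle hlt


/-!
When every epsilon number of `x` lies in `{α} ∪ (α ∩ e)`, the substitution acts on these
epsilon numbers by a strictly increasing map (`α ↦ e`, the others, all below `min α e`, fixed),
and by induction on the Cantor normal form it is strictly increasing on all such `x`: comparing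
`y` with `ω ^ L * c + r` reduces to comparing with `ω ^ L * c` (bounded through the exponent `L`)
or to comparing remainders. Strict monotonicity keeps the substituted exponents decreasing, so
`ω ^ L * c + r` is sent to the Cantor normal form `ω ^ L[α := e] * c + r[α := e]`, and the
epsilon numbers of `s[α := e]` are exactly the images of those of `s`.
-/

open Function

theorem IsEps.ne_zero {x : Ordinal} (h : IsEps x) : x ≠ 0 := by
  rintro rfl
  simp [IsEps] at h

theorem IsEps.CNF_eq {x : Ordinal} (h : IsEps x) : CNF ω x = [(x, 1)] := by
  have hx : ω ^ x = x := h
  simpa [hx, CNF.zero_right] using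
    CNF.opow_mul_add (e := x) one_lt_omega0 one_ne_zero one_lt_omega0 (opow_pos x omega0_pos)

theorem nextEps_spec (x : Ordinal) : IsEps (nextEps x) ∧ x < nextEps x :=
  csInf_mem (s := {e | IsEps e ∧ x < e})
    ⟨nfp (ω ^ ·) (x + 1), nfp_fp (isNormal_opow one_lt_omega0) _,
      (lt_add_one x).trans_le (le_nfp _ _)⟩

theorem le_of_lt_nextEps {x a : Ordinal} (ha : IsEps a) (h : a < nextEps x) : a ≤ x :=
  not_lt.1 fun hxa => (csInf_le (OrderBot.bddBelow {e | IsEps e ∧ x < e}) ⟨ha, hxa⟩).not_gt h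

@[elab_as_elim]
theorem cnf_head_induction {P : Ordinal → Prop} (zero : P 0) (eps : ∀ x, IsEps x → P x)
    (head : ∀ L c r, c ≠ 0 → c < ω → r < ω ^ L → P L → P r → P (ω ^ L * c + r))
    (x : Ordinal) : P x := by
  induction x using WellFoundedLT.induction with | ind x IH => ?_
  rcases eq_or_ne x 0 with rfl | hx0
  · exact zero
  by_cases hx : IsEps x
  · exact eps x hx
  have hlog : log ω x < x := (lt_opow_iff_log_lt one_lt_omega0 hx0).1
    ((right_le_opow x one_lt_omega0).lt_of_ne (Ne.symm hx))
  have := head _ _ _ (div_opow_log_pos ω hx0).ne' (div_opow_log_lt x one_lt_omega0)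
    (mod_lt x (opow_ne_zero _ omega0_ne_zero)) (IH _ hlog) (IH _ (mod_opow_log_lt_self ω hx0))
  rwa [div_add_mod] at this

theorem mem_Ep_self {x : Ordinal} (h : IsEps x) : x ∈ Ep x := InEp.self x h

theorem isEps_of_mem_Ep {a x : Ordinal} (h : a ∈ Ep x) : IsEps a := by
  induction h with
  | self x hx => exact hx
  | exp _ _ _ _ _ _ _ ih => exact ih

theorem le_of_mem_Ep {a x : Ordinal} (h : a ∈ Ep x) : a ≤ x := by
  induction h with
  | self => exact le_rfl
  | exp _ _ _ _ _ hm _ ih => exact ih.trans ((CNF.fst_le_log hm).trans (log_le_self _ _))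

theorem Ep_of_isEps {x : Ordinal} (h : IsEps x) : Ep x = {x} := by
  ext a
  constructor
  · rintro (_ | ⟨_, _, _, _, hx⟩)
    · rfl
    · exact absurd h hx
  · rintro rfl
    exact mem_Ep_self h

theorem mem_Ep_iff {a x : Ordinal} : a ∈ Ep x ↔ ∃ p ∈ CNF ω x, a ∈ Ep p.1 := by
  by_cases h : IsEps x
  · simp [h.CNF_eq]
  constructor
  · rintro (⟨_, hx⟩ | ⟨_, b, c, _, _, hm, ha⟩)
    · exact absurd hx h
    · exact ⟨(b, c), hm, ha⟩
  · rintro ⟨p, hm, ha⟩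
    exact InEp.exp x p.1 p.2 a h hm ha

theorem Ep_zero : Ep 0 = ∅ := by
  ext a
  simp [mem_Ep_iff (x := 0), CNF.zero_right]

theorem Ep_opow_mul_add {L c r : Ordinal} (hc : c ≠ 0) (hcω : c < ω) (hr : r < ω ^ L) :
    Ep (ω ^ L * c + r) = Ep L ∪ Ep r := by
  ext a
  rw [mem_Ep_iff, CNF.opow_mul_add one_lt_omega0 hc hcω hr, Set.mem_union, mem_Ep_iff (x := r)]
  simp

section Subst

variable {α e : Ordinal}

theorem subst_of_isEps {x : Ordinal} (h : IsEps x) : subst α e x = update id α e x := by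
  rw [subst, dif_pos (show ω ^ x = x from h), update_apply]
  rfl

theorem isEps_update (he : IsEps e) {x : Ordinal} (h : IsEps x) : IsEps (update id α e x) := by
  rw [update_apply]
  split_ifs
  exacts [he, h]

theorem subst_of_not_isEps {x : Ordinal} (h : ¬IsEps x) :
    subst α e x = ((CNF ω x).map fun p => ω ^ subst α e p.1 * p.2).sum := by
  rw [subst, dif_neg (show ¬ω ^ x = x from h)]
  exact congrArg List.sum
    (List.attach_map_val (f := fun p : Ordinal × Ordinal => ω ^ subst α e p.1 * p.2))

theorem subst_zero : subst α e 0 = 0 := by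
  rw [subst_of_not_isEps (by simp [IsEps]), CNF.zero_right]
  rfl

theorem subst_eq_sum (he : IsEps e) (x : Ordinal) :
    subst α e x = ((CNF ω x).map fun p => ω ^ subst α e p.1 * p.2).sum := by
  by_cases h : IsEps x
  · simpa [h.CNF_eq, subst_of_isEps h] using (isEps_update he h).symm
  · exact subst_of_not_isEps h

theorem subst_opow_mul_add (he : IsEps e) {L c r : Ordinal} (hc : c ≠ 0) (hcω : c < ω)
    (hr : r < ω ^ L) : subst α e (ω ^ L * c + r) = ω ^ subst α e L * c + subst α e r := by
  rw [subst_eq_sum he, CNF.opow_mul_add one_lt_omega0 hc hcω hr, List.map_cons, List.sum_cons,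
    ← subst_eq_sum he]

variable {S : Set Ordinal}

theorem subst_lt_of_isEps (he : IsEps e) {ε : Ordinal} (hε : IsEps ε) {y : Ordinal}
    (h : ∀ a ∈ Ep y, update id α e a < ε) : subst α e y < ε := by
  induction y using cnf_head_induction with
  | zero => rw [subst_zero]; exact pos_iff_ne_zero.2 hε.ne_zero
  | eps y hy => exact subst_of_isEps hy ▸ h y (mem_Ep_self hy)
  | head L c r hc hcω hr ihL ihr =>
    simp only [Ep_opow_mul_add hc hcω hr, Set.mem_union, or_imp, forall_and] at h
    rw [subst_opow_mul_add he hc hcω hr]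
    exact (isPrincipal_add_omega0_opow ε (opow_mul_lt_opow hcω (ihL h.1))
      ((ihr h.2).trans_eq hε.symm)).trans_eq hε

theorem subst_lt_opow_of_lt_opow (he : IsEps e) {L y : Ordinal}
    (hmono : ∀ a < L, Ep a ⊆ S → subst α e a < subst α e L)
    (hy : Ep y ⊆ S) (hyL : y < ω ^ L) : subst α e y < ω ^ subst α e L := by
  induction y using cnf_head_induction with
  | zero => rw [subst_zero]; exact opow_pos _ omega0_pos
  | eps y hy' =>
    have hyL' : y < L := (opow_lt_opow_iff_right one_lt_omega0).1 (hy'.trans_lt hyL)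
    have hsy : ω ^ subst α e y = subst α e y := by
      rw [subst_of_isEps hy']
      exact isEps_update he hy'
    rw [← hsy]
    exact (opow_lt_opow_iff_right one_lt_omega0).2 (hmono y hyL' hy)
  | head M d s hd hdω hs ihM ihs =>
    rw [Ep_opow_mul_add hd hdω hs, Set.union_subset_iff] at hy
    have hML : M < L := (opow_lt_opow_iff_right one_lt_omega0).1
      (((le_mul_left _ (pos_iff_ne_zero.2 hd)).trans le_self_add).trans_lt hyL)
    rw [subst_opow_mul_add he hd hdω hs]
    exact isPrincipal_add_omega0_opow _ (opow_mul_lt_opow hdω (hmono M hML hy.1))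
      (ihs hy.2 (le_add_self.trans_lt hyL))

theorem subst_lt_opow_mul_of_lt_opow_mul (he : IsEps e) {L c y : Ordinal}
    (hmono : ∀ a < L, Ep a ⊆ S → subst α e a < subst α e L) (hcω : c < ω)
    (hy : Ep y ⊆ S) (hyc : y < ω ^ L * c) : subst α e y < ω ^ subst α e L * c := by
  have hc : 0 < c := pos_iff_ne_zero.2 (by rintro rfl; simp at hyc)
  rcases lt_or_ge y (ω ^ L) with hyL | hyL
  · exact (subst_lt_opow_of_lt_opow he hmono hy hyL).trans_le (le_mul_left _ hc)
  have hL : ω ^ L ≠ 0 := opow_ne_zero _ omega0_ne_zero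
  have hq : y / ω ^ L < c := (lt_mul_iff_div_lt hL).1 hyc
  have hq0 : y / ω ^ L ≠ 0 := ((div_pos hL).2 hyL).ne'
  have hr : y % ω ^ L < ω ^ L := mod_lt y hL
  rw [← div_add_mod y (ω ^ L)] at hy ⊢
  rw [Ep_opow_mul_add hq0 (hq.trans hcω) hr, Set.union_subset_iff] at hy
  rw [subst_opow_mul_add he hq0 (hq.trans hcω) hr]
  exact opow_mul_add_lt_opow_mul (subst_lt_opow_of_lt_opow he hmono hy.2 hr) hq

theorem subst_strictMonoOn (he : IsEps e) (hS : StrictMonoOn (update id α e) S) :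
    StrictMonoOn (subst α e) {x | Ep x ⊆ S} := by
  intro y hy x hx hyx
  simp only [Set.mem_ofPred_eq] at hy hx
  induction x using cnf_head_induction generalizing y with
  | zero => exact absurd hyx zero_le.not_gt
  | eps x hx' =>
    rw [subst_of_isEps hx']
    exact subst_lt_of_isEps he (isEps_update he hx') fun a ha =>
      hS (hy ha) (hx (mem_Ep_self hx')) ((le_of_mem_Ep ha).trans_lt hyx)
  | head L c r hc hcω hr ihL ihr =>
    rw [Ep_opow_mul_add hc hcω hr, Set.union_subset_iff] at hx
    rw [subst_opow_mul_add he hc hcω hr]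
    rcases lt_or_ge y (ω ^ L * c) with hyc | hyc
    · exact (subst_lt_opow_mul_of_lt_opow_mul he (fun a haL ha => ihL ha hx.1 haL) hcω hy
        hyc).trans_le le_self_add
    obtain ⟨r', rfl⟩ := exists_add_of_le hyc
    have hr' : r' < r := (add_lt_add_iff_left _).1 hyx
    rw [Ep_opow_mul_add hc hcω (hr'.trans hr), Set.union_subset_iff] at hy
    rw [subst_opow_mul_add he hc hcω (hr'.trans hr)]
    exact add_lt_add_right (ihr hy.2 hx.2 hr') _

theorem Ep_subst (he : IsEps e) (hS : StrictMonoOn (update id α e) S) {x : Ordinal}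
    (hx : Ep x ⊆ S) : Ep (subst α e x) = update id α e '' Ep x := by
  induction x using cnf_head_induction with
  | zero => rw [subst_zero, Ep_zero, Set.image_empty]
  | eps x hx' =>
    rw [subst_of_isEps hx', Ep_of_isEps (isEps_update he hx'), Ep_of_isEps hx',
      Set.image_singleton]
  | head L c r hc hcω hr ihL ihr =>
    rw [Ep_opow_mul_add hc hcω hr, Set.union_subset_iff] at hx
    have hsr : subst α e r < ω ^ subst α e L :=
      subst_lt_opow_of_lt_opow he (fun a haL ha => subst_strictMonoOn he hS ha hx.1 haL) hx.2 hr
    rw [subst_opow_mul_add he hc hcω hr, Ep_opow_mul_add hc hcω hsr, Ep_opow_mul_add hc hcω hr,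
      Set.image_union, ihL hx.1, ihr hx.2]

end Subst

section UpdateId

variable {β : Type*} [LinearOrder β] {α e : β}

theorem strictMonoOn_update_id :
    StrictMonoOn (update id α e) (insert α (Set.Iio α ∩ Set.Iio e)) := by
  rintro a ha b (rfl | hb) hab
  · rw [update_of_ne hab.ne, update_self]
    exact (ha.resolve_left hab.ne).2
  · rw [update_of_ne (hab.trans hb.1).ne, update_of_ne hb.1.ne]
    exact hab

theorem update_id_le {a : β} (ha : a ∈ insert α (Set.Iio α ∩ Set.Iio e)) :
    update id α e a ≤ e := by
  rcases ha with rfl | ha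
  · rw [update_self]
  · rw [update_of_ne ha.1.ne]
    exact ha.2.le

theorem image_update_id_inter_Iio {T : Set β} (hT : T ⊆ insert α (Set.Iio α ∩ Set.Iio e)) :
    update id α e '' T ∩ Set.Iio e = T ∩ Set.Iio α := by
  ext z
  constructor
  · rintro ⟨⟨a, ha, rfl⟩, hz⟩
    rcases hT ha with rfl | ha'
    · rw [update_self] at hz
      exact (lt_irrefl _ hz).elim
    · rw [update_of_ne ha'.1.ne]
      exact ⟨ha, ha'.1⟩
  · rintro ⟨hz, hzα⟩
    exact ⟨⟨z, hz, update_of_ne hzα.ne _ _⟩, ((hT hz).resolve_left hzα.ne).2⟩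

end UpdateId

theorem subst_mem_and_Ep_general (α e s : Ordinal.{0}) (he : IsEps e)
    (hs : s < nextEps α) (hse : Ep s ∩ Set.Iio α ⊆ Set.Iio e) :
    subst α e s < nextEps e ∧
      Ep (subst α e s) ∩ Set.Iio e = Ep s ∩ Set.Iio α := by
  have hS : Ep s ⊆ insert α (Set.Iio α ∩ Set.Iio e) := fun a ha =>
    (le_of_lt_nextEps (isEps_of_mem_Ep ha) ((le_of_mem_Ep ha).trans_lt hs)).eq_or_lt.imp id
      fun haα => ⟨haα, hse ⟨ha, haα⟩⟩
  refine ⟨subst_lt_of_isEps he (nextEps_spec e).1 fun a ha =>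
    (update_id_le (hS ha)).trans_lt (nextEps_spec e).2, ?_⟩
  rw [Ep_subst he strictMonoOn_update_id hS, image_update_id_inter_Iio hS]

/-- If s < α⁺ and Ep(s) ∩ α ⊆ e, then s[α := e] < e⁺ and
Ep(s[α := e]) ∩ e = Ep(s) ∩ α. -/
theorem subst_mem_and_Ep (α e s : Ordinal.{0}) (hα : IsEps α) (he : IsEps e)
    (hs : s < nextEps α) (hse : Ep s ∩ Set.Iio α ⊆ Set.Iio e) :
    subst α e s < nextEps e ∧
      Ep (subst α e s) ∩ Set.Iio e = Ep s ∩ Set.Iio α :=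
  subst_mem_and_Ep_general α e s he hs hse
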